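/- arXiv:1705.05509 — 2 statements merged into one kernel-verified Lean document; each statement's English description precedes it below -/
import Mathlib

section
/- Let n = 4f+1 be an odd prime with f odd, and suppose there exist integers x, y with n = x² + 4y² such that the cyclotomic numbers of order 4 with respect to the generator α satisfy the f-odd table. Let s_3 be the binary sequence of length n with support set D_0∪D_3. Then for every 1 ≤ τ < n: R_{s_3}(τ) = 2y − 1 if τ ∈ D_0∪D_2, and R_{s_3}(τ) = −2y − 1 if τ ∈ D_1∪D_3. -/
/-- Cross-correlation of two sequences of length `N` over `ℤ_H`, with `ξ = exp(2πi/H)`. -/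
noncomputable def crossCorr (H N : ℕ) (s t : ZMod N → ZMod H) (τ : ZMod N) : ℂ :=
  ∑ i ∈ Finset.range N,
    Complex.exp (2 * (Real.pi : ℂ) * Complex.I / (H : ℂ)) ^ ((s (i : ZMod N) - t ((i : ZMod N) + τ)).val)

/-- Cross-correlation of two binary sequences of length `N` (an integer). -/
def binCorr (N : ℕ) (s t : ZMod N → ZMod 2) (τ : ZMod N) : ℤ :=
  ∑ i ∈ Finset.range N, (-1 : ℤ) ^ ((s (i : ZMod N) + t ((i : ZMod N) + τ)).val)

/-- Cross-correlation of two quaternary sequences of length `N`, with `ξ = √-1`. -/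
noncomputable def quadCorr (N : ℕ) (s t : ZMod N → ZMod 4) (τ : ZMod N) : ℂ :=
  ∑ i ∈ Finset.range N, Complex.I ^ ((s (i : ZMod N) - t ((i : ZMod N) + τ)).val)

/-- Interleaving `u = I(a, b)`: `u(2i) = a(i)`, `u(2i+1) = b(i)`. -/
def interleaveSeq {H : ℕ} (n : ℕ) (a b : ZMod n → ZMod H) : ZMod (2 * n) → ZMod H :=
  fun k => if k.val % 2 = 0 then a ((k.val / 2 : ℕ) : ZMod n) else b ((k.val / 2 : ℕ) : ZMod n)

/-- The inverse Gray mapping `φ⁻¹ : ℤ₂ × ℤ₂ → ℤ₄`. -/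
def grayInv (a b : ZMod 2) : ZMod 4 :=
  if a = 0 then (if b = 0 then 0 else 1) else (if b = 0 then 3 else 2)

/-- Construction I: the quaternary sequence of length `2n` built from
`a₀, a₁, a₂, a₃` and bits `e₀, e₁, e₂`. -/
def constructionI (n : ℕ) (a0 a1 a2 a3 : ZMod n → ZMod 2)
    (e0 e1 e2 : ZMod 2) : ZMod (2 * n) → ZMod 4 :=
  let lam : ZMod n := (((n + 1) / 2 : ℕ) : ZMod n)
  let c := interleaveSeq n a0 (fun i => e0 + a1 (i + lam))
  let d := interleaveSeq n (fun i => e1 + a2 i) (fun i => e2 + a3 (i + lam))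
  fun i => grayInv (c i) (d i)

/-- The cyclotomic class `D_i` of order 4 w.r.t. the generator `α`. -/
def cycClass (n f : ℕ) (α : ZMod n) (i : ℕ) : Set (ZMod n) :=
  {x | ∃ t < f, x = α ^ (4 * t + i)}

/-- The cyclotomic number `(i, j)` of order 4: `|(D_i + 1) ∩ D_j|`. -/
noncomputable def cycNum (n f : ℕ) (α : ZMod n) (i j : ℕ) : ℕ :=
  Set.ncard {x : ZMod n | x - 1 ∈ cycClass n f α i ∧ x ∈ cycClass n f α j}

open Classical in
/-- The binary sequence of length `n` with support set `D_i ∪ D_j`. -/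
noncomputable def cycSeq (n f : ℕ) (α : ZMod n) (i j : ℕ) : ZMod n → ZMod 2 :=
  fun x => if x ∈ cycClass n f α i ∪ cycClass n f α j then 1 else 0

/-- Six binary sequences with supports `D₀∪D₁, D₀∪D₂, D₀∪D₃, D₁∪D₂, D₁∪D₃, D₂∪D₃`. -/
noncomputable def sixSeq (n f : ℕ) (α : ZMod n) : Fin 6 → ZMod n → ZMod 2
  | 0 => cycSeq n f α 0 1
  | 1 => cycSeq n f α 0 2
  | 2 => cycSeq n f α 0 3
  | 3 => cycSeq n f α 1 2
  | 4 => cycSeq n f α 1 3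
  | 5 => cycSeq n f α 2 3

/-- 16 times the cyclotomic numbers of order 4 in the `f` odd case. -/
def oddTable16 (n x y : ℤ) (i j : ℕ) : ℤ :=
  match i, j with
  | 0, 0 => n - 7 + 2*x
  | 0, 1 => n + 1 + 2*x - 8*y
  | 0, 2 => n + 1 - 6*x
  | 0, 3 => n + 1 + 2*x + 8*y
  | 1, 0 => n - 3 - 2*x
  | 1, 1 => n - 3 - 2*x
  | 1, 2 => n + 1 + 2*x + 8*y
  | 1, 3 => n + 1 + 2*x - 8*y
  | 2, 0 => n - 7 + 2*x
  | 2, 1 => n - 3 - 2*x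
  | 2, 2 => n - 7 + 2*x
  | 2, 3 => n - 3 - 2*x
  | 3, 0 => n - 3 - 2*x
  | 3, 1 => n + 1 + 2*x + 8*y
  | 3, 2 => n + 1 + 2*x - 8*y
  | 3, 3 => n - 3 - 2*x
  | _, _ => 0

/-- 16 times the cyclotomic numbers of order 4 in the `f` even case. -/
def evenTable16 (n x y : ℤ) (i j : ℕ) : ℤ :=
  match i, j with
  | 0, 0 => n - 11 - 6*x
  | 0, 1 => n - 3 + 2*x + 8*y
  | 0, 2 => n - 3 + 2*x
  | 0, 3 => n - 3 + 2*x - 8*y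
  | 1, 0 => n - 3 + 2*x + 8*y
  | 1, 1 => n - 3 + 2*x - 8*y
  | 1, 2 => n + 1 - 2*x
  | 1, 3 => n + 1 - 2*x
  | 2, 0 => n - 3 + 2*x
  | 2, 1 => n + 1 - 2*x
  | 2, 2 => n - 3 + 2*x
  | 2, 3 => n + 1 - 2*x
  | 3, 0 => n - 3 + 2*x - 8*y
  | 3, 1 => n + 1 - 2*x
  | 3, 2 => n + 1 - 2*x
  | 3, 3 => n - 3 + 2*x + 8*y
  | _, _ => 0

/-! Writing `(-1)^{s(i)} = 1 - 2·[i ∈ S]` for the support `S = D₀ ∪ D₃` gives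
`R(τ) = n - 4|S| + 4|S ∩ (S - τ)|`. Multiplication by `τ ∈ D_k` shifts the class index
by `k`, so `z ↦ τ (z - 1)` identifies `|D_A ∩ (D_B - τ)|` with the cyclotomic number
`(A - k, B - k)`. Hence `R(τ)` is `n - 8f` plus four times a sum of four cyclotomic numbers,
which the table evaluates to `±2y - 1`. -/

open Finset

lemma binCorr_eq_sum_zmod {N : ℕ} [NeZero N] (s t : ZMod N → ZMod 2) (τ : ZMod N) :
    binCorr N s t τ = ∑ i : ZMod N, (-1 : ℤ) ^ (s i + t (i + τ)).val := by
  refine Finset.sum_nbij' (↑) ZMod.val (fun _ _ => mem_univ _)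
    (fun z _ => mem_range.2 z.val_lt) (fun i hi => ZMod.val_natCast_of_lt (mem_range.1 hi))
    (fun z _ => ZMod.natCast_zmod_val z) (fun _ _ => rfl)

lemma neg_one_pow_val_add (a b : ZMod 2) :
    (-1 : ℤ) ^ (a + b).val =
      (1 - 2 * if a = 1 then 1 else 0) * (1 - 2 * if b = 1 then 1 else 0) := by
  fin_cases a <;> fin_cases b <;> rfl

lemma binCorr_self_eq {N : ℕ} [NeZero N] (s : ZMod N → ZMod 2) (τ : ZMod N) :
    binCorr N s s τ =
      N - 4 * {z | s z = 1}.ncard + 4 * {z | s z = 1 ∧ s (z + τ) = 1}.ncard := by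
  classical
  have hshift : ∑ z : ZMod N, (if s (z + τ) = 1 then 1 else 0 : ℤ) =
      ∑ z : ZMod N, (if s z = 1 then 1 else 0 : ℤ) :=
    Fintype.sum_equiv (Equiv.addRight τ) _ _ fun _ => rfl
  simp only [binCorr_eq_sum_zmod, neg_one_pow_val_add, Set.ncard_eq_toFinset_card',
    Set.toFinset_ofPred]
  simp only [mul_sub, sub_mul, one_mul, mul_one, sum_sub_distrib, ← mul_sum, hshift]
  simp only [sum_const, card_univ, ZMod.card, mul_mul_mul_comm, ite_zero_mul_ite_zero, ← mul_sum,
    sum_boole, nsmul_eq_mul, mul_one]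
  ring

lemma ncard_union_inter_union {X : Type*} [Finite X] {P Q P' Q' : Set X} (h : Disjoint P Q)
    (h' : Disjoint P' Q') :
    ((P ∪ Q) ∩ (P' ∪ Q')).ncard =
      (P ∩ P').ncard + (P ∩ Q').ncard + (Q ∩ P').ncard + (Q ∩ Q').ncard := by
  have h'' {R : Set X} : Disjoint (R ∩ P') (R ∩ Q') :=
    h'.mono Set.inter_subset_right Set.inter_subset_right
  rw [Set.union_inter_distrib_right, Set.ncard_union_eq (h.mono Set.inter_subset_left
    Set.inter_subset_left), Set.inter_union_distrib_left, Set.inter_union_distrib_left,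
    Set.ncard_union_eq h'', Set.ncard_union_eq h'', ← add_assoc]

section CyclotomicClass

variable {n f : ℕ} {α : ZMod n}

lemma pow_mem_cycClass (hord : orderOf α = 4 * f) (hf : 0 < f) (e : ℕ) :
    α ^ e ∈ cycClass n f α (e % 4) := by
  have hlt : e % (4 * f) < 4 * f := Nat.mod_lt _ (by omega)
  have hmod : e % (4 * f) % 4 = e % 4 := Nat.mod_mod_of_dvd e (dvd_mul_right 4 f)
  refine ⟨e % (4 * f) / 4, by omega, ?_⟩
  rw [← hmod, Nat.div_add_mod, ← hord, pow_mod_orderOf]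

lemma isOfFinOrder_of_mem_cycClass (hord : orderOf α = 4 * f) {i : ℕ} {z : ZMod n}
    (hz : z ∈ cycClass n f α i) : IsOfFinOrder α := by
  obtain ⟨t, ht, -⟩ := hz
  exact orderOf_pos_iff.1 (by omega)

lemma mul_mem_cycClass (hord : orderOf α = 4 * f) {i j : ℕ} {z w : ZMod n}
    (hz : z ∈ cycClass n f α i) (hw : w ∈ cycClass n f α j) :
    z * w ∈ cycClass n f α ((i + j) % 4) := by
  obtain ⟨t, ht, rfl⟩ := hz
  obtain ⟨u, -, rfl⟩ := hw
  rw [← pow_add, show (i + j) % 4 = (4 * t + i + (4 * u + j)) % 4 by omega]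
  exact pow_mem_cycClass hord (by omega) _

lemma eq_of_mem_cycClass (hord : orderOf α = 4 * f) {i j : ℕ} (hi : i < 4) (hj : j < 4)
    {z : ZMod n} (hzi : z ∈ cycClass n f α i) (hzj : z ∈ cycClass n f α j) : i = j := by
  have hα := isOfFinOrder_of_mem_cycClass hord hzi
  obtain ⟨t, -, rfl⟩ := hzi
  obtain ⟨u, -, hu⟩ := hzj
  have h : 4 * t + i ≡ 4 * u + j [MOD 4] :=
    (hord ▸ hα.pow_eq_pow_iff_modEq.1 hu).of_mul_right f
  unfold Nat.ModEq at h
  omega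

lemma disjoint_cycClass (hord : orderOf α = 4 * f) {i j : ℕ} (hi : i < 4) (hj : j < 4)
    (hij : i ≠ j) : Disjoint (cycClass n f α i) (cycClass n f α j) :=
  Set.disjoint_left.2 fun _ hzi hzj => hij (eq_of_mem_cycClass hord hi hj hzi hzj)

lemma ne_zero_of_mem_cycClass [Nontrivial (ZMod n)] (hord : orderOf α = 4 * f) {i : ℕ}
    {z : ZMod n} (hz : z ∈ cycClass n f α i) : z ≠ 0 := by
  have hα := isOfFinOrder_of_mem_cycClass hord hz
  obtain ⟨t, -, rfl⟩ := hz
  exact (hα.isUnit.pow _).ne_zero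

lemma ncard_cycClass (hord : orderOf α = 4 * f) {i : ℕ} (hi : i < 4) :
    (cycClass n f α i).ncard = f := by
  classical
  have himage : cycClass n f α i = (Finset.range f).image (fun t => α ^ (4 * t + i)) := by
    ext z
    simp [cycClass, eq_comm]
  rcases Nat.eq_zero_or_pos f with rfl | hf
  · simp [himage]
  have hα : IsOfFinOrder α := orderOf_pos_iff.1 (by omega)
  rw [himage, Set.ncard_coe_finset, Finset.card_image_of_injOn, Finset.card_range]
  intro t ht u hu htu
  simp only [Finset.coe_range, Set.mem_Iio] at ht hu
  have := (hord ▸ hα.pow_eq_pow_iff_modEq.1 htu).eq_of_lt_of_lt (by omega) (by omega)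
  omega

variable [Fact n.Prime]

lemma mul_mem_cycClass_iff (hord : orderOf α = 4 * f)
    (hgen : ∀ z : ZMod n, z ≠ 0 → ∃ k : ℕ, z = α ^ k)
    {k a : ℕ} (ha : a < 4) {τ w : ZMod n} (hτ : τ ∈ cycClass n f α k) :
    τ * w ∈ cycClass n f α ((k + a) % 4) ↔ w ∈ cycClass n f α a := by
  refine ⟨fun h => ?_, mul_mem_cycClass hord hτ⟩
  have hw : w ≠ 0 := right_ne_zero_of_mul (ne_zero_of_mem_cycClass hord h)
  obtain ⟨e, rfl⟩ := hgen w hw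
  obtain ⟨t, ht, -⟩ := id hτ
  have hmem := pow_mem_cycClass hord (by omega) e
  have := eq_of_mem_cycClass hord (Nat.mod_lt _ (by norm_num)) (Nat.mod_lt _ (by norm_num)) h
    (mul_mem_cycClass hord hτ hmem)
  rwa [show e % 4 = a by omega] at hmem

lemma ncard_inter_preimage_add_cycClass (hord : orderOf α = 4 * f)
    (hgen : ∀ z : ZMod n, z ≠ 0 → ∃ k : ℕ, z = α ^ k) {k a b : ℕ} (ha : a < 4)
    (hb : b < 4) {A B : ℕ} (hA : (k + a) % 4 = A) (hB : (k + b) % 4 = B) {τ : ZMod n}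
    (hτ : τ ∈ cycClass n f α k) :
    (cycClass n f α A ∩ (· + τ) ⁻¹' cycClass n f α B).ncard =
      cycNum n f α a b := by
  subst hA hB
  have hτ0 := ne_zero_of_mem_cycClass hord hτ
  have hg : Function.Injective fun x : ZMod n => τ * (x - 1) :=
    (mul_right_injective₀ hτ0).comp sub_left_injective
  rw [cycNum, ← Set.ncard_preimage_of_injective_subset_range hg
    fun z _ => ⟨τ⁻¹ * z + 1, by simp [hτ0]⟩]
  congr 1
  ext x
  simp only [Set.mem_preimage, Set.mem_inter_iff, Set.mem_ofPred_eq,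
    show τ * (x - 1) + τ = τ * x by ring,
    mul_mem_cycClass_iff hord hgen ha hτ, mul_mem_cycClass_iff hord hgen hb hτ]

lemma binCorr_cycSeq_zero_three (hord : orderOf α = 4 * f)
    (hgen : ∀ z : ZMod n, z ≠ 0 → ∃ k : ℕ, z = α ^ k) {k a : ℕ} (ha : a < 4)
    (hka : (k + a) % 4 = 0) {τ : ZMod n} (hτ : τ ∈ cycClass n f α k) :
    binCorr n (cycSeq n f α 0 3) (cycSeq n f α 0 3) τ = n - 8 * f +
      4 * (cycNum n f α a a + cycNum n f α a ((a + 3) % 4) + cycNum n f α ((a + 3) % 4) a +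
        cycNum n f α ((a + 3) % 4) ((a + 3) % 4) : ℕ) := by
  have hsupp : {z | cycSeq n f α 0 3 z = 1} = cycClass n f α 0 ∪ cycClass n f α 3 := by
    ext z
    simp [cycSeq, -Set.mem_union]
  have hdisj : Disjoint (cycClass n f α 0) (cycClass n f α 3) :=
    disjoint_cycClass hord (by norm_num) (by norm_num) (by norm_num)
  have hb : (a + 3) % 4 < 4 := Nat.mod_lt _ (by norm_num)
  have hkb : (k + (a + 3) % 4) % 4 = 3 := by omega
  rw [binCorr_self_eq, show {z | cycSeq n f α 0 3 z = 1 ∧ cycSeq n f α 0 3 (z + τ) = 1} =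
      {z | cycSeq n f α 0 3 z = 1} ∩ (· + τ) ⁻¹' {z | cycSeq n f α 0 3 z = 1} from rfl,
    hsupp, Set.preimage_union, ncard_union_inter_union hdisj (hdisj.preimage _),
    Set.ncard_union_eq hdisj, ncard_cycClass hord (i := 0) (by norm_num),
    ncard_cycClass hord (i := 3) (by norm_num),
    ncard_inter_preimage_add_cycClass hord hgen ha ha hka hka hτ,
    ncard_inter_preimage_add_cycClass hord hgen ha hb hka hkb hτ,
    ncard_inter_preimage_add_cycClass hord hgen hb ha hkb hka hτ,
    ncard_inter_preimage_add_cycClass hord hgen hb hb hkb hkb hτ]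
  push_cast
  ring

end CyclotomicClass

lemma orderOf_eq_sub_one_of_forall_eq_pow {p : ℕ} [Fact p.Prime] {α : ZMod p} (hα : α ≠ 0)
    (hgen : ∀ z : ZMod p, z ≠ 0 → ∃ k : ℕ, z = α ^ k) : orderOf α = p - 1 := by
  have hpowers (u : (ZMod p)ˣ) : u ∈ Submonoid.powers (Units.mk0 α hα) := by
    obtain ⟨k, hk⟩ := hgen u u.ne_zero
    exact ⟨k, Units.ext (by simp [hk])⟩
  calc orderOf α = orderOf (Units.mk0 α hα) := by rw [← orderOf_units, Units.val_mk0]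
    _ = p - 1 := by
      rw [orderOf_eq_card_of_forall_mem_powers hpowers, Nat.card_eq_fintype_card, ZMod.card_units]

theorem stmt17_general (n f : ℕ) (hp : n.Prime) (hnf : n = 4 * f + 1)
    (x y : ℤ)
    (α : ZMod n) (hα : ∀ z : ZMod n, z ≠ 0 → ∃ k : ℕ, z = α ^ k)
    (hTab : ∀ i < 4, ∀ j < 4, 16 * (cycNum n f α i j : ℤ) = oddTable16 (n : ℤ) x y i j) :
    ∀ τ : ℕ, 1 ≤ τ → τ < n →
      (((τ : ZMod n) ∈ cycClass n f α 0 ∪ cycClass n f α 2) →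
        binCorr n (cycSeq n f α 0 3) (cycSeq n f α 0 3) (τ : ZMod n) = 2 * y - 1) ∧
      (((τ : ZMod n) ∈ cycClass n f α 1 ∪ cycClass n f α 3) →
        binCorr n (cycSeq n f α 0 3) (cycSeq n f α 0 3) (τ : ZMod n) = -2 * y - 1) := by
  have : Fact n.Prime := ⟨hp⟩
  have hα0 : α ≠ 0 := by
    rintro rfl
    obtain ⟨_ | k, hk⟩ := hα (-1) (neg_ne_zero.2 one_ne_zero)
    · have : Fact (2 < n) := ⟨by have := hp.two_le; omega⟩
      exact ZMod.neg_one_ne_one (by simpa using hk)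
    · simp at hk
  have hord : orderOf α = 4 * f := by
    rw [orderOf_eq_sub_one_of_forall_eq_pow hα0 hα, hnf, Nat.add_sub_cancel]
  intro τ _ _
  have hcorr {k a : ℕ} (ha : a < 4) (hka : (k + a) % 4 = 0)
      (hτ : (τ : ZMod n) ∈ cycClass n f α k) :
      4 * binCorr n (cycSeq n f α 0 3) (cycSeq n f α 0 3) τ = 4 * n - 32 * f +
        oddTable16 n x y a a + oddTable16 n x y a ((a + 3) % 4) + oddTable16 n x y ((a + 3) % 4) a +
        oddTable16 n x y ((a + 3) % 4) ((a + 3) % 4) := by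
    have hb : (a + 3) % 4 < 4 := Nat.mod_lt _ (by norm_num)
    rw [binCorr_cycSeq_zero_three hord hα ha hka hτ, ← hTab _ ha _ ha, ← hTab _ ha _ hb,
      ← hTab _ hb _ ha, ← hTab _ hb _ hb]
    push_cast
    ring
  have hn : (n : ℤ) = 4 * f + 1 := by exact_mod_cast hnf
  refine ⟨?_, ?_⟩ <;> rintro (hτ | hτ)
  · have := hcorr (a := 0) (by norm_num) (by norm_num) hτ
    norm_num [oddTable16] at this
    linarith
  · have := hcorr (a := 2) (by norm_num) (by norm_num) hτ
    norm_num [oddTable16] at this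
    linarith
  · have := hcorr (a := 3) (by norm_num) (by norm_num) hτ
    norm_num [oddTable16] at this
    linarith
  · have := hcorr (a := 1) (by norm_num) (by norm_num) hτ
    norm_num [oddTable16] at this
    linarith

theorem stmt17 (n f : ℕ) (hp : n.Prime) (hnf : n = 4 * f + 1) (hf : Odd f)
    (x y : ℤ) (hxy : (n : ℤ) = x ^ 2 + 4 * y ^ 2)
    (α : ZMod n) (hα : ∀ z : ZMod n, z ≠ 0 → ∃ k : ℕ, z = α ^ k)
    (hTab : ∀ i < 4, ∀ j < 4, 16 * (cycNum n f α i j : ℤ) = oddTable16 (n : ℤ) x y i j) :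
    ∀ τ : ℕ, 1 ≤ τ → τ < n →
      (((τ : ZMod n) ∈ cycClass n f α 0 ∪ cycClass n f α 2) →
        binCorr n (cycSeq n f α 0 3) (cycSeq n f α 0 3) (τ : ZMod n) = 2 * y - 1) ∧
      (((τ : ZMod n) ∈ cycClass n f α 1 ∪ cycClass n f α 3) →
        binCorr n (cycSeq n f α 0 3) (cycSeq n f α 0 3) (τ : ZMod n) = -2 * y - 1) :=
  stmt17_general n f hp hnf x y α hα hTab
end

section
/- Let n = 4f+1 be an odd prime with f odd, and suppose there exist integers x, y with n = x² + 4y² such that the cyclotomic numbers of order 4 with respect to the generator α satisfy the f-odd table. Let s_2 and s_5 be the binary sequences of length n with support sets D_0∪D_2 and D_1∪D_3 respectively. Then R_{s_2,s_5}(0) = 2 − n, and R_{s_2,s_5}(τ) = 1 for every 1 ≤ τ < n. -/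
/-!
The support `D₀ ∪ D₂` of `s₂` is the set of nonzero squares of `ZMod n` and the support
`D₁ ∪ D₃` of `s₅` is the set of non-squares, because the generator `α` is a non-square.
Hence `(-1)^{s₂(z)} = δ(z) - χ(z)` and `(-1)^{s₅(z)} = δ(z) + χ(z)`, where `χ` is the quadratic
character and `δ` the indicator of `0`. Expanding the correlation, the two mixed terms give
`χ(τ) - χ(-τ) = 0` since `n ≡ 1 (mod 4)`, and what remains is the autocorrelation
`∑ₓ χ(x) χ(x + τ)` of `χ`, which is `n - 1` for `τ = 0` and `-1` otherwise (a Jacobi sum).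
-/

open Finset

theorem sum_range_natCast_eq_sum_univ {M : Type*} [AddCommMonoid M] (n : ℕ) [NeZero n]
    (g : ZMod n → M) : ∑ i ∈ range n, g i = ∑ z : ZMod n, g z :=
  sum_nbij' (↑) ZMod.val (fun _ _ => mem_univ _) (fun z _ => mem_range.mpr z.val_lt)
    (fun _ hi => ZMod.val_cast_of_lt (mem_range.mp hi)) (fun z _ => ZMod.natCast_zmod_val z)
    (fun _ _ => rfl)

theorem neg_one_pow_val_add_zmod_two (a b : ZMod 2) :
    (-1 : ℤ) ^ (a + b).val = (-1) ^ a.val * (-1) ^ b.val := by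
  revert a b; decide

section QuadraticChar

variable {F : Type*} [Field F] [Fintype F]

theorem not_isSquare_of_forall_eq_pow (hF : ringChar F ≠ 2) {α : F}
    (hα : ∀ z : F, z ≠ 0 → ∃ k : ℕ, z = α ^ k) : ¬IsSquare α := by
  rintro ⟨b, rfl⟩
  obtain ⟨z, hz⟩ := FiniteField.exists_nonsquare hF
  obtain ⟨k, rfl⟩ := hα z (by rintro rfl; exact hz .zero)
  exact hz ⟨b ^ k, mul_pow b b k⟩

variable [DecidableEq F]

theorem quadraticChar_pow_of_forall_eq_pow (hF : ringChar F ≠ 2) {α : F}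
    (hα : ∀ z : F, z ≠ 0 → ∃ k : ℕ, z = α ^ k) (k : ℕ) :
    quadraticChar F (α ^ k) = (-1) ^ k := by
  rw [map_pow, quadraticChar_neg_one_iff_not_isSquare.mpr (not_isSquare_of_forall_eq_pow hF hα)]

theorem sum_quadraticChar_mul_self :
    ∑ x : F, quadraticChar F x * quadraticChar F x = Fintype.card F - 1 := by
  have h : ∀ x : F, quadraticChar F x * quadraticChar F x = 1 - if x = 0 then 1 else 0 := by
    intro x
    split_ifs with hx
    · simp [hx]
    · rw [← sq, quadraticChar_sq_one hx, sub_zero]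
  simp only [h, sum_sub_distrib, sum_const, card_univ, sum_ite_eq', mem_univ, if_true,
    nsmul_eq_mul, mul_one]

theorem sum_quadraticChar_mul_quadraticChar_add (hF : ringChar F ≠ 2) {τ : F} (hτ : τ ≠ 0) :
    ∑ x : F, quadraticChar F x * quadraticChar F (x + τ) = -1 := by
  set χ := quadraticChar F
  have hχ : χ ≠ 1 := quadraticChar_ne_one hF
  have hτ2 : χ τ * χ τ = 1 := by rw [← sq, quadraticChar_sq_one hτ]
  have hneg : χ (-1) * χ (-1) = 1 := by rw [← sq, quadraticChar_sq_one (neg_ne_zero.2 one_ne_zero)]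
  -- substituting `x = -τ u` turns the sum into `χ(-1) J(χ, χ)`, and `χ⁻¹ = χ`
  have hsubst : ∑ x : F, χ x * χ (x + τ) = χ (-1) * jacobiSum χ χ := by
    rw [← Fintype.sum_bijective _ (mulLeft_bijective₀ (-τ) (neg_ne_zero.2 hτ)) _ _ fun _ => rfl,
      jacobiSum, mul_sum]
    refine sum_congr rfl fun u _ => ?_
    rw [show -τ * u + τ = τ * (1 - u) by ring, show -τ * u = -1 * τ * u by ring]
    simp only [map_mul]
    linear_combination (χ (-1) * χ u * χ (1 - u)) * hτ2
  have hinv : χ⁻¹ = χ := (quadraticChar_isQuadratic F).inv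
  have hJ : jacobiSum χ χ = -χ (-1) := by simpa only [hinv] using jacobiSum_nontrivial_inv hχ
  rw [hsubst, hJ]
  linear_combination -hneg

end QuadraticChar

section CyclotomicClasses

variable {n f : ℕ} [Fact n.Prime] {α : ZMod n}

theorem quadraticChar_of_mem_cycClass (hn : n ≠ 2) (hα : ∀ z : ZMod n, z ≠ 0 → ∃ k : ℕ, z = α ^ k)
    {i : ℕ} {z : ZMod n} (hz : z ∈ cycClass n f α i) : quadraticChar (ZMod n) z = (-1) ^ i := by
  obtain ⟨t, -, rfl⟩ := hz
  rw [quadraticChar_pow_of_forall_eq_pow (by rwa [ZMod.ringChar_zmod_n]) hα, pow_add, pow_mul]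
  norm_num

theorem exists_mem_cycClass (hnf : n = 4 * f + 1) (hα : ∀ z : ZMod n, z ≠ 0 → ∃ k : ℕ, z = α ^ k)
    {z : ZMod n} (hz : z ≠ 0) : ∃ i < 4, z ∈ cycClass n f α i := by
  have hF : ringChar (ZMod n) ≠ 2 := by rw [ZMod.ringChar_zmod_n]; omega
  have hα0 : α ≠ 0 := by rintro rfl; exact not_isSquare_of_forall_eq_pow hF hα .zero
  have hα4f : α ^ (4 * f) = 1 := by
    have := ZMod.pow_card_sub_one_eq_one hα0
    rwa [show n - 1 = 4 * f by omega] at this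
  have hf : 0 < f := by have := (Fact.out : n.Prime).two_le; omega
  obtain ⟨k, rfl⟩ := hα z hz
  obtain ⟨q, r, hr, rfl⟩ : ∃ q r, r < 4 * f ∧ k = 4 * f * q + r :=
    ⟨k / (4 * f), k % (4 * f), Nat.mod_lt _ (by omega), (Nat.div_add_mod k (4 * f)).symm⟩
  refine ⟨r % 4, by omega, r / 4, by omega, ?_⟩
  rw [pow_add, pow_mul, hα4f, one_pow, one_mul, Nat.div_add_mod]

theorem mem_cycClass_zero_union_two_iff (hnf : n = 4 * f + 1)
    (hα : ∀ z : ZMod n, z ≠ 0 → ∃ k : ℕ, z = α ^ k) {z : ZMod n} :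
    z ∈ cycClass n f α 0 ∪ cycClass n f α 2 ↔ quadraticChar (ZMod n) z = 1 := by
  have hn : n ≠ 2 := by omega
  constructor
  · rintro (h | h) <;> simpa using quadraticChar_of_mem_cycClass hn hα h
  · intro h
    obtain ⟨i, hi, hzi⟩ := exists_mem_cycClass hnf hα (show z ≠ 0 by rintro rfl; simp at h)
    rw [quadraticChar_of_mem_cycClass hn hα hzi] at h
    interval_cases i <;> simp_all

theorem mem_cycClass_one_union_three_iff (hnf : n = 4 * f + 1)
    (hα : ∀ z : ZMod n, z ≠ 0 → ∃ k : ℕ, z = α ^ k) {z : ZMod n} :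
    z ∈ cycClass n f α 1 ∪ cycClass n f α 3 ↔ quadraticChar (ZMod n) z = -1 := by
  have hn : n ≠ 2 := by omega
  constructor
  · rintro (h | h) <;> simpa using quadraticChar_of_mem_cycClass hn hα h
  · intro h
    obtain ⟨i, hi, hzi⟩ := exists_mem_cycClass hnf hα (show z ≠ 0 by rintro rfl; simp at h)
    rw [quadraticChar_of_mem_cycClass hn hα hzi] at h
    interval_cases i <;> simp_all

theorem neg_one_pow_cycSeq_zero_two (hnf : n = 4 * f + 1)
    (hα : ∀ z : ZMod n, z ≠ 0 → ∃ k : ℕ, z = α ^ k) (z : ZMod n) :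
    (-1 : ℤ) ^ (cycSeq n f α 0 2 z).val = (if z = 0 then 1 else 0) - quadraticChar (ZMod n) z := by
  simp only [cycSeq, mem_cycClass_zero_union_two_iff hnf hα]
  rcases eq_or_ne z 0 with rfl | hz
  · simp
  · rcases quadraticChar_dichotomy hz with h | h <;> simp [h, hz, ZMod.val_one]

theorem neg_one_pow_cycSeq_one_three (hnf : n = 4 * f + 1)
    (hα : ∀ z : ZMod n, z ≠ 0 → ∃ k : ℕ, z = α ^ k) (z : ZMod n) :
    (-1 : ℤ) ^ (cycSeq n f α 1 3 z).val = (if z = 0 then 1 else 0) + quadraticChar (ZMod n) z := by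
  simp only [cycSeq, mem_cycClass_one_union_three_iff hnf hα]
  rcases eq_or_ne z 0 with rfl | hz
  · simp
  · rcases quadraticChar_dichotomy hz with h | h <;> simp [h, hz, ZMod.val_one]

end CyclotomicClasses

theorem binCorr_cycSeq_zero_two_cycSeq_one_three {n f : ℕ} [Fact n.Prime] {α : ZMod n}
    (hnf : n = 4 * f + 1) (hα : ∀ z : ZMod n, z ≠ 0 → ∃ k : ℕ, z = α ^ k) (τ : ZMod n) :
    binCorr n (cycSeq n f α 0 2) (cycSeq n f α 1 3) τ = if τ = 0 then 2 - (n : ℤ) else 1 := by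
  have : NeZero n := ⟨(Fact.out : n.Prime).ne_zero⟩
  have hF : ringChar (ZMod n) ≠ 2 := by rw [ZMod.ringChar_zmod_n]; omega
  have hneg : quadraticChar (ZMod n) (-τ) = quadraticChar (ZMod n) τ := by
    rw [neg_eq_neg_one_mul, map_mul, quadraticChar_neg_one hF, ZMod.card,
      ZMod.χ₄_nat_one_mod_four (by omega), one_mul]
  have hsum : binCorr n (cycSeq n f α 0 2) (cycSeq n f α 1 3) τ =
      (if τ = 0 then 1 else 0) + quadraticChar (ZMod n) τ - quadraticChar (ZMod n) (-τ) -
        ∑ x : ZMod n, quadraticChar (ZMod n) x * quadraticChar (ZMod n) (x + τ) := by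
    rw [binCorr, sum_range_natCast_eq_sum_univ n
      (fun z => (-1 : ℤ) ^ (cycSeq n f α 0 2 z + cycSeq n f α 1 3 (z + τ)).val)]
    simp only [neg_one_pow_val_add_zmod_two, neg_one_pow_cycSeq_zero_two hnf hα,
      neg_one_pow_cycSeq_one_three hnf hα, sub_mul, mul_add, sum_add_distrib, sum_sub_distrib]
    simp only [ite_mul, mul_ite, one_mul, zero_mul, mul_one, mul_zero, sum_ite_eq',
      mem_univ, if_true, zero_add, add_eq_zero_iff_eq_neg, neg_eq_zero]
    ring
  rw [hsum, hneg]
  split_ifs with hτ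
  · subst hτ
    simp only [add_zero, sum_quadraticChar_mul_self, ZMod.card]
    ring
  · rw [sum_quadraticChar_mul_quadraticChar_add hF hτ]
    ring

theorem stmt19_general (n f : ℕ) (hp : n.Prime) (hnf : n = 4 * f + 1)
    (α : ZMod n) (hα : ∀ z : ZMod n, z ≠ 0 → ∃ k : ℕ, z = α ^ k) :
    binCorr n (cycSeq n f α 0 2) (cycSeq n f α 1 3) 0 = 2 - (n : ℤ) ∧
      ∀ τ : ℕ, 1 ≤ τ → τ < n →
        binCorr n (cycSeq n f α 0 2) (cycSeq n f α 1 3) (τ : ZMod n) = 1 := by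
  have : Fact n.Prime := ⟨hp⟩
  refine ⟨by simpa using binCorr_cycSeq_zero_two_cycSeq_one_three hnf hα 0, fun τ hτ1 hτn => ?_⟩
  have hτ : (τ : ZMod n) ≠ 0 := by
    rw [Ne, ZMod.natCast_eq_zero_iff]
    exact fun h => absurd (Nat.le_of_dvd hτ1 h) (by omega)
  simpa [hτ] using binCorr_cycSeq_zero_two_cycSeq_one_three hnf hα (τ : ZMod n)

theorem stmt19 (n f : ℕ) (hp : n.Prime) (hnf : n = 4 * f + 1) (hf : Odd f)
    (x y : ℤ) (hxy : (n : ℤ) = x ^ 2 + 4 * y ^ 2)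
    (α : ZMod n) (hα : ∀ z : ZMod n, z ≠ 0 → ∃ k : ℕ, z = α ^ k)
    (hTab : ∀ i < 4, ∀ j < 4, 16 * (cycNum n f α i j : ℤ) = oddTable16 (n : ℤ) x y i j) :
    binCorr n (cycSeq n f α 0 2) (cycSeq n f α 1 3) 0 = 2 - (n : ℤ) ∧
      ∀ τ : ℕ, 1 ≤ τ → τ < n →
        binCorr n (cycSeq n f α 0 2) (cycSeq n f α 1 3) (τ : ZMod n) = 1 :=
  stmt19_general n f hp hnf α hα
end
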